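/- arXiv:2504.08888 — 5 statements merged into one kernel-verified Lean document; each statement's English description precedes it below -/
import Mathlib

section
/- Let X and Y be finite sets, π a pmf on X, L a likelihood with L(·|x) a pmf on Y, with positive marginal m(y) = Σ_x L(y|x)π(x); let P(x|y) = L(y|x)π(x)/m(y) be the Bayes posterior and q(x,y,x★) = P(x|y)·L(y|x★)·π(x★) the planted ensemble. Fix an observable O : X → ℝ and write ⟨O⟩_y := Σ_x O(x)P(x|y) and ⟨O²⟩_y := Σ_x O(x)²P(x|y). Define the posterior variance δO² := Σ_{y,x★} L(y|x★)π(x★)·(⟨O²⟩_y − ⟨O⟩_y²), the mean-squared error of the posterior mean MSEM := Σ_{y,x★} L(y|x★)π(x★)·(⟨O⟩_y − O(x★))², and the mean-squared error on the planted ensemble MSE := Σ_{x,y,x★} q(x,y,x★)·(O(x) − O(x★))². Then at Bayes optimality δO² = MSEM = (1/2)·MSE. -/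
/-!
Since `P(x|y) = L(y|x)π(x)/m(y)`, averaging over the teacher's joint law of `(y, x★)` is the same
as drawing `y` from the marginal `m` and then `x★` from the posterior `P(·|y)`: at Bayes
optimality the planted signal is just another posterior sample. So, for each `y`, `MSEM` is the
mean squared deviation of `O` from its posterior mean, i.e. the posterior variance, and `MSE` is
the mean squared difference of `O` at two independent posterior samples, i.e. twice it.
-/

open Finset

section Moments

variable {ι R : Type*} [Fintype ι] [CommRing R] (p O : ι → R) {μ₁ μ₂ : R}

theorem sum_mul_mean_sub_sq_eq_variance (hp : ∑ i, p i = 1)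
    (hμ₁ : μ₁ = ∑ i, O i * p i) (hμ₂ : μ₂ = ∑ i, O i ^ 2 * p i) :
    ∑ i, p i * (μ₁ - O i) ^ 2 = μ₂ - μ₁ ^ 2 := by
  calc ∑ i, p i * (μ₁ - O i) ^ 2
      = ∑ i, (μ₁ ^ 2 * p i - 2 * μ₁ * (O i * p i) + O i ^ 2 * p i) :=
        sum_congr rfl fun i _ => by ring
    _ = μ₁ ^ 2 * ∑ i, p i - 2 * μ₁ * ∑ i, O i * p i + ∑ i, O i ^ 2 * p i := by
        rw [sum_add_distrib, sum_sub_distrib, mul_sum, mul_sum]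
    _ = μ₂ - μ₁ ^ 2 := by rw [hp, ← hμ₁, ← hμ₂]; ring

theorem sum_sum_mul_mul_sub_sq_eq_two_mul_variance (hp : ∑ i, p i = 1)
    (hμ₁ : μ₁ = ∑ i, O i * p i) (hμ₂ : μ₂ = ∑ i, O i ^ 2 * p i) :
    ∑ i, ∑ j, p i * p j * (O i - O j) ^ 2 = 2 * (μ₂ - μ₁ ^ 2) := by
  calc ∑ i, ∑ j, p i * p j * (O i - O j) ^ 2
      = ∑ i, ∑ j, (O i ^ 2 * p i * p j - 2 * (O i * p i * (O j * p j)) + p i * (O j ^ 2 * p j)) :=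
        sum_congr rfl fun i _ => sum_congr rfl fun j _ => by ring
    _ = (∑ i, O i ^ 2 * p i) * ∑ j, p j - 2 * ((∑ i, O i * p i) * ∑ j, O j * p j)
          + (∑ i, p i) * ∑ j, O j ^ 2 * p j := by
        simp only [sum_add_distrib, sum_sub_distrib, ← mul_sum, ← sum_mul]
    _ = 2 * (μ₂ - μ₁ ^ 2) := by rw [hp, ← hμ₁, ← hμ₂]; ring

end Moments

section Posterior

variable {X Y : Type*} [Fintype X] {π : X → ℝ} {L : X → Y → ℝ} {m : Y → ℝ} {P : X → Y → ℝ}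

theorem sum_posterior_eq_one (hm : ∀ y, m y = ∑ x, L x y * π x) (hmpos : ∀ y, 0 < m y)
    (hP : ∀ x y, P x y = L x y * π x / m y) (y : Y) : ∑ x, P x y = 1 := by
  simp only [hP, ← sum_div, ← hm, div_self (hmpos y).ne']

theorem sum_joint_mul_eq_marginal_mul_sum_posterior_mul (hmpos : ∀ y, 0 < m y)
    (hP : ∀ x y, P x y = L x y * π x / m y) (y : Y) (f : X → ℝ) :
    ∑ x, L x y * π x * f x = m y * ∑ x, P x y * f x := by
  simp only [hP, mul_sum]
  exact sum_congr rfl fun x _ => by field_simp [(hmpos y).ne']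

end Posterior

theorem bayes_optimal_moment_relations_general
    {X Y : Type*} [Fintype X] [Fintype Y]
    (π : X → ℝ) (L : X → Y → ℝ) (O : X → ℝ)
    (m : Y → ℝ) (hm : ∀ y, m y = ∑ x, L x y * π x) (hmpos : ∀ y, 0 < m y)
    (P : X → Y → ℝ) (hP : ∀ x y, P x y = L x y * π x / m y)
    (q : X → Y → X → ℝ) (hq : ∀ x y xs, q x y xs = P x y * L xs y * π xs)
    (mean1 : Y → ℝ) (hmean1 : ∀ y, mean1 y = ∑ x, O x * P x y)
    (mean2 : Y → ℝ) (hmean2 : ∀ y, mean2 y = ∑ x, (O x) ^ 2 * P x y)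
    (δO2 MSEM MSE : ℝ)
    (hδ : δO2 = ∑ y, ∑ xs, L xs y * π xs * (mean2 y - (mean1 y) ^ 2))
    (hMSEM : MSEM = ∑ y, ∑ xs, L xs y * π xs * (mean1 y - O xs) ^ 2)
    (hMSE : MSE = ∑ x, ∑ y, ∑ xs, q x y xs * (O x - O xs) ^ 2) :
    δO2 = MSEM ∧ δO2 = (1 / 2) * MSE := by
  have hpost := sum_posterior_eq_one hm hmpos hP
  have hjoint := sum_joint_mul_eq_marginal_mul_sum_posterior_mul hmpos hP
  have hδ' : δO2 = ∑ y, m y * (mean2 y - mean1 y ^ 2) := by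
    simp only [hδ, ← sum_mul, ← hm]
  have hMSEM' : MSEM = ∑ y, m y * (mean2 y - mean1 y ^ 2) := by
    refine hMSEM.trans (sum_congr rfl fun y _ => ?_)
    rw [hjoint, sum_mul_mean_sub_sq_eq_variance _ O (hpost y) (hmean1 y) (hmean2 y)]
  have hMSE' : MSE = ∑ y, m y * (2 * (mean2 y - mean1 y ^ 2)) := by
    rw [hMSE, sum_comm]
    refine sum_congr rfl fun y _ => ?_
    calc ∑ x, ∑ xs, q x y xs * (O x - O xs) ^ 2
        = ∑ x, ∑ xs, L xs y * π xs * (P x y * (O x - O xs) ^ 2) :=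
          sum_congr rfl fun x _ => sum_congr rfl fun xs _ => by rw [hq]; ring
      _ = m y * ∑ x, ∑ xs, P x y * P xs y * (O x - O xs) ^ 2 := by
          simp only [hjoint, mul_sum]
          exact sum_congr rfl fun x _ => sum_congr rfl fun xs _ => by ring
      _ = m y * (2 * (mean2 y - mean1 y ^ 2)) := by
          rw [sum_sum_mul_mul_sub_sq_eq_two_mul_variance _ O (hpost y) (hmean1 y) (hmean2 y)]
  refine ⟨hδ'.trans hMSEM'.symm, ?_⟩
  rw [hδ', hMSE', mul_sum]
  exact sum_congr rfl fun y _ => by ring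

/-- **Moment relations at Bayes optimality.**
For a finite Bayes-optimal teacher–student inference problem (prior `π`, likelihood `L`,
positive marginal `m`, Bayes posterior `P`, planted ensemble `q`) and an observable `O`,
the averaged posterior variance `δO²` equals the mean-squared error of the posterior
mean `MSEM`, which equals half of the mean-squared error `MSE` on the planted ensemble. -/
theorem bayes_optimal_moment_relations
    {X Y : Type*} [Fintype X] [Fintype Y]
    (π : X → ℝ) (L : X → Y → ℝ) (O : X → ℝ)
    (hπ0 : ∀ x, 0 ≤ π x) (hπ1 : ∑ x, π x = 1)
    (hL0 : ∀ x y, 0 ≤ L x y) (hL1 : ∀ x, ∑ y, L x y = 1)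
    (m : Y → ℝ) (hm : ∀ y, m y = ∑ x, L x y * π x) (hmpos : ∀ y, 0 < m y)
    (P : X → Y → ℝ) (hP : ∀ x y, P x y = L x y * π x / m y)
    (q : X → Y → X → ℝ) (hq : ∀ x y xs, q x y xs = P x y * L xs y * π xs)
    (mean1 : Y → ℝ) (hmean1 : ∀ y, mean1 y = ∑ x, O x * P x y)
    (mean2 : Y → ℝ) (hmean2 : ∀ y, mean2 y = ∑ x, (O x) ^ 2 * P x y)
    (δO2 MSEM MSE : ℝ)
    (hδ : δO2 = ∑ y, ∑ xs, L xs y * π xs * (mean2 y - (mean1 y) ^ 2))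
    (hMSEM : MSEM = ∑ y, ∑ xs, L xs y * π xs * (mean1 y - O xs) ^ 2)
    (hMSE : MSE = ∑ x, ∑ y, ∑ xs, q x y xs * (O x - O xs) ^ 2) :
    δO2 = MSEM ∧ δO2 = (1 / 2) * MSE :=
  bayes_optimal_moment_relations_general π L O m hm hmpos P hP q hq mean1 hmean1 mean2 hmean2 δO2
    MSEM MSE hδ hMSEM hMSE
end

section
/- Fix ε > 0 and ε★ ∈ ℝ, and define the velocity v : (0,1] → ℝ by v(λ) = (ln 2)/λ + 2ε(λε − ε★). Define the critical teacher signal strength ε★c(ε) := (ln 2)/(2ε) + ε if ε ≤ √((ln 2)/2), and ε★c(ε) := √(2 ln 2) if ε ≥ √((ln 2)/2). Then inf_{λ∈(0,1]} v(λ) = 2ε·(ε★c(ε) − ε★). In particular, the infimum is zero if and only if ε★ = ε★c(ε), strictly negative if and only if ε★ > ε★c(ε), and strictly positive if and only if ε★ < ε★c(ε). (Thus the phase boundary of the classical planted XOR is ε★c(ε) = (ln 2)/(2ε) + ε for ε < √((ln 2)/2) and the constant √(2 ln 2) ≈ 1.17741 for ε ≥ √((ln 2)/2).) -/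
open Set

/-- **Phase boundary of the classical planted XOR model.**
For `ε > 0` and the wavefront velocity `v(λ) = (ln 2)/λ + 2ε(λε − ε★)` on `(0,1]`,
with the critical teacher signal strength `ε★c(ε) = (ln 2)/(2ε) + ε` for
`ε ≤ √((ln 2)/2)` and `ε★c(ε) = √(2 ln 2)` otherwise, the infimum of `v` over `(0,1]`
equals `2ε(ε★c(ε) − ε★)`; hence it vanishes iff `ε★ = ε★c(ε)`, is negative iff
`ε★ > ε★c(ε)` and is positive iff `ε★ < ε★c(ε)`. -/
theorem planted_xor_phase_boundary
    (ε εs : ℝ) (hε : 0 < ε)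
    (v : ℝ → ℝ)
    (hv : ∀ l, v l = Real.log 2 / l + 2 * ε * (l * ε - εs))
    (εc : ℝ)
    (hεc : εc = if ε ≤ Real.sqrt (Real.log 2 / 2)
      then Real.log 2 / (2 * ε) + ε
      else Real.sqrt (2 * Real.log 2)) :
    sInf (v '' Set.Ioc 0 1) = 2 * ε * (εc - εs) ∧
    (sInf (v '' Set.Ioc 0 1) = 0 ↔ εs = εc) ∧
    (sInf (v '' Set.Ioc 0 1) < 0 ↔ εc < εs) ∧
    (0 < sInf (v '' Set.Ioc 0 1) ↔ εs < εc) := by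
  have hL : (0:ℝ) < Real.log 2 := Real.log_pos one_lt_two
  set L := Real.log 2 with hLdef
  suffices h : sInf (v '' Set.Ioc 0 1) = 2 * ε * (εc - εs) by
    refine ⟨h, ?_, ?_, ?_⟩ <;> rw [h] <;> constructor <;> intro hh <;> nlinarith
  have key : IsLeast (v '' Set.Ioc 0 1) (2 * ε * (εc - εs)) := by
    by_cases hcase : ε ≤ Real.sqrt (L / 2)
    · rw [hεc, if_pos hcase]
      have hsq : ε ^ 2 ≤ L / 2 := by
        nlinarith [Real.sq_sqrt (by positivity : (0:ℝ) ≤ L / 2), Real.sqrt_nonneg (L/2)]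
      constructor
      · exact ⟨1, by simp, by rw [hv]; field_simp; ring⟩
      · rintro y ⟨l, ⟨hl0, hl1⟩, rfl⟩
        rw [hv]
        have h2 : (L + 2*ε*ε*(1-l))*l ≤ L := by
          nlinarith [mul_nonneg (sub_nonneg.mpr hl1) (by nlinarith : (0:ℝ) ≤ L - 2*ε*ε*l)]
        have h3 : L + 2*ε*ε*(1-l) ≤ L / l := (le_div_iff₀ hl0).mpr h2
        have h4 : 2*ε*(L/(2*ε)+ε-εs) = L + 2*ε*ε - 2*ε*εs := by field_simp
        rw [h4]; nlinarith
    · rw [hεc, if_neg hcase]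
      push_neg at hcase
      set s := Real.sqrt (L / 2) with hsdef
      have hs : 0 < s := Real.sqrt_pos.mpr (by positivity)
      have hs2 : s ^ 2 = L / 2 := Real.sq_sqrt (by positivity)
      have h2L : Real.sqrt (2 * L) = 2 * s := by
        rw [show (2 * L) = (2*s)^2 by nlinarith, Real.sqrt_sq (by positivity)]
      rw [h2L]
      constructor
      · refine ⟨s / ε, ⟨by positivity, by rw [div_le_one hε]; exact hcase.le⟩, ?_⟩
        rw [hv]
        field_simp
        nlinarith
      · rintro y ⟨l, ⟨hl0, hl1⟩, rfl⟩
        rw [hv]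
        have h2 : (4*ε*s - 2*ε*ε*l)*l ≤ L := by nlinarith [sq_nonneg (s - ε*l)]
        have h3 : 4*ε*s - 2*ε*ε*l ≤ L / l := (le_div_iff₀ hl0).mpr h2
        nlinarith
  exact key.csInf_eq
end

section
/- For every λ ∈ (0,1] the inequality (1/λ)·ln( 3/(2 + λ − λ²) ) ≥ 4·ln(4/3)·(1 − λ) holds, with equality at λ = 1/2. Equivalently: setting ε = ε★ = √(2·ln(4/3)), the velocity v(λ) := 2ε(λε − ε★) + (1/λ)·ln( 3/(2 + λ − λ²) ) satisfies v(λ) ≥ 0 for all λ ∈ (0,1] and v(1/2) = 0, so min_{λ∈(0,1]} v(λ) = 0 is attained at λ = 1/2. Hence ε★ = √(2·ln(4/3)) ≈ 0.758528 is the Bayes-optimal critical signal strength of the d = 1 Haar-random U(1)-symmetric monitored quantum tree (quantum planted XOR). -/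
open Set

/-- **Bayes-optimal critical point of the `d = 1` quantum planted XOR.**
For every `λ ∈ (0,1]` one has `(1/λ)·ln(3/(2 + λ − λ²)) ≥ 4·ln(4/3)·(1 − λ)`, with
equality at `λ = 1/2`.  Equivalently, at `ε = ε★ = √(2 ln(4/3))` the travelling-wave
velocity `v(λ) = 2ε(λε − ε★) + (1/λ)·ln(3/(2 + λ − λ²))` satisfies `v ≥ 0` on `(0,1]`
and `v(1/2) = 0`, so its minimum over `(0,1]` is `0`, attained at `λ = 1/2`.  Hence
`ε★ = √(2 ln(4/3))` is the Bayes-optimal critical signal strength of the `d = 1`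
Haar-random U(1)-symmetric monitored quantum tree. -/
theorem quantum_planted_xor_bayes_optimal_point
    (ε εs : ℝ) (hε : ε = Real.sqrt (2 * Real.log (4 / 3))) (hεs : εs = ε)
    (v : ℝ → ℝ)
    (hv : ∀ l, v l = 2 * ε * (l * ε - εs) + (1 / l) * Real.log (3 / (2 + l - l ^ 2))) :
    (∀ l ∈ Set.Ioc (0 : ℝ) 1,
      4 * Real.log (4 / 3) * (1 - l) ≤ (1 / l) * Real.log (3 / (2 + l - l ^ 2))) ∧
    ((1 / (1 / 2 : ℝ)) * Real.log (3 / (2 + (1 / 2 : ℝ) - (1 / 2 : ℝ) ^ 2)) =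
      4 * Real.log (4 / 3) * (1 - (1 / 2 : ℝ))) ∧
    (∀ l ∈ Set.Ioc (0 : ℝ) 1, 0 ≤ v l) ∧
    v (1 / 2) = 0 ∧
    IsLeast (v '' Set.Ioc 0 1) 0 := by
  have L0 : (0 : ℝ) ≤ Real.log (4 / 3) := Real.log_nonneg (by norm_num)
  have hε2 : ε ^ 2 = 2 * Real.log (4 / 3) := by
    rw [hε]; exact Real.sq_sqrt (by positivity)
  -- the key inequality
  have key : ∀ l ∈ Set.Ioc (0 : ℝ) 1,
      4 * Real.log (4 / 3) * (1 - l) ≤ (1 / l) * Real.log (3 / (2 + l - l ^ 2)) := by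
    rintro l ⟨hl0, hl1⟩
    have hA : (0 : ℝ) < 2 + l - l ^ 2 := by nlinarith
    have e1 : (3 : ℝ) / (2 + l - l ^ 2) = (4 / 3) * ((2 + l - l ^ 2) * (4 / 9))⁻¹ := by
      field_simp; ring
    have h2 : Real.log (3 / (2 + l - l ^ 2))
        = Real.log (4 / 3) - Real.log ((2 + l - l ^ 2) * (4 / 9)) := by
      rw [e1, Real.log_mul (by norm_num) (by positivity), Real.log_inv]
      ring
    have h1 : Real.log ((2 + l - l ^ 2) * (4 / 9)) ≤ (2 + l - l ^ 2) * (4 / 9) - 1 :=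
      Real.log_le_sub_one_of_pos (by positivity)
    have h3 : 4 * Real.log (4 / 3) * (1 - l) * l ≤ Real.log (3 / (2 + l - l ^ 2)) := by
      rw [h2]
      nlinarith [mul_nonneg L0 (sq_nonneg (2 * l - 1)), sq_nonneg (2 * l - 1)]
    rw [one_div, ← div_eq_inv_mul, le_div_iff₀ hl0]
    linarith [h3]
  -- rewrite v in a convenient form
  have hv' : ∀ l, v l = 4 * Real.log (4 / 3) * (l - 1)
      + (1 / l) * Real.log (3 / (2 + l - l ^ 2)) := by
    intro l
    rw [hv l, hεs]
    linear_combination (2 * l - 2) * hε2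
  have hfrac : (3 : ℝ) / (2 + (1 / 2 : ℝ) - (1 / 2 : ℝ) ^ 2) = 4 / 3 := by norm_num
  have heq : (1 / (1 / 2 : ℝ)) * Real.log (3 / (2 + (1 / 2 : ℝ) - (1 / 2 : ℝ) ^ 2)) =
      4 * Real.log (4 / 3) * (1 - (1 / 2 : ℝ)) := by
    rw [hfrac]; ring
  have hnonneg : ∀ l ∈ Set.Ioc (0 : ℝ) 1, 0 ≤ v l := by
    intro l hl
    rw [hv' l]
    linarith [key l hl]
  have hv12 : v (1 / 2) = 0 := by
    rw [hv' (1 / 2), hfrac]; ring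
  refine ⟨key, heq, hnonneg, hv12, ⟨⟨1 / 2, by norm_num, hv12⟩, ?_⟩⟩
  rintro x ⟨l, hl, rfl⟩
  exact hnonneg l hl
end

section
/- Let I and R be nonempty finite types, B ≥ 1, and β : I → Fin B a surjective block labeling with block sizes N_α := |β⁻¹(α)| ≥ 1; let P_α ∈ Matrix(I, I, ℂ) be the diagonal 0–1 projection onto the coordinates i with β(i) = α. Let u be the random unitary on ℂ^I that is block diagonal with respect to this partition, whose restriction to each block subspace is Haar-distributed on the unitary group of that block, independently across blocks. Then for every matrix A ∈ Matrix(I×R, I×R, ℂ): E_u[ (u ⊗ I_R)·A·(u ⊗ I_R)† ] = Σ_{α=0}^{B−1} (1/N_α) · ( P_α ⊗ Tr_I[ (P_α ⊗ I_R)·A·(P_α ⊗ I_R) ] ), where Tr_I denotes the partial trace over the I tensor factor (i.e. (Tr_I M)(r, r′) = Σ_{i} M((i,r),(i,r′))). -/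
/-! Entrywise, `E[(u ⊗ 1) A (u ⊗ 1)†]` is a combination of the second moments
`E[u i j * conj (u i' j')]`, so it suffices to show that these equal
`δ_{i i'} δ_{j j'} [β i = β j] / N_{β i}`. All of this comes from left invariance of the
product of the Haar measures under the group of block-diagonal unitaries: multiplying by the
sign flip of row `i` negates the moment when `i ≠ i'`, swapping two rows of a block shows that
the diagonal moments are constant along the block, and unitarity of `u` makes their sum over the
block equal to `δ_{j j'}`. -/

open Finset Matrix MeasureTheory
open scoped Kronecker

/-- Matrices inherit the product measurable structure. -/
noncomputable instance matrixMeasurableSpace {m n α : Type*} [MeasurableSpace α] :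
    MeasurableSpace (Matrix m n α) :=
  inferInstanceAs (MeasurableSpace (m → n → α))

/-- Partial trace over the first tensor factor:
`(Tr_A M)(b, b') = Σ_a M((a,b), (a,b'))`. -/
noncomputable def ptraceFst {A B : Type*} [Fintype A]
    (M : Matrix (A × B) (A × B) ℂ) : Matrix B B ℂ :=
  Matrix.of fun b b' => ∑ a, M (a, b) (a, b')

/-- The block-diagonal unitary matrix on `ℂ^I` assembled from unitaries on the block
subspaces `β⁻¹(α)` of a block labeling `β : I → Fin B`. -/
noncomputable def blockAssemble {I : Type*} [Fintype I] [DecidableEq I] {B : ℕ}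
    (β : I → Fin B)
    (v : ∀ α : Fin B, Matrix.unitaryGroup {i : I // β i = α} ℂ) :
    Matrix I I ℂ :=
  Matrix.of fun i j =>
    if h : β j = β i then
      ((v (β i) : Matrix {k : I // β k = β i} {k : I // β k = β i} ℂ)
        ⟨i, rfl⟩ ⟨j, h⟩)
    else 0

open scoped ComplexConjugate

instance matrixBorelSpace {K : Type*} [Fintype K] : BorelSpace (Matrix K K ℂ) :=
  inferInstanceAs (BorelSpace (K → K → ℂ))

namespace Matrix.unitaryGroup

variable {K : Type*} [Fintype K] [DecidableEq K]

def signFlip (p : K → Prop) [DecidablePred p] : unitaryGroup K ℂ :=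
  ⟨diagonal fun k => if p k then -1 else 1, by
    rw [mem_unitaryGroup_iff, star_eq_conjTranspose, diagonal_conjTranspose,
      diagonal_mul_diagonal, ← diagonal_one]
    congr 1; funext k; by_cases h : p k <;> simp [h]⟩

theorem signFlip_mul_apply (p : K → Prop) [DecidablePred p] (u : unitaryGroup K ℂ) (a b : K) :
    (signFlip p * u) a b = (if p a then -1 else 1) * u a b := by
  simp [signFlip, diagonal_mul]

def ofPerm (σ : Equiv.Perm K) : unitaryGroup K ℂ :=
  ⟨σ.permMatrix ℂ, by
    rw [mem_unitaryGroup_iff, star_eq_conjTranspose, conjTranspose_permMatrix,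
      ← permMatrix_mul, inv_mul_cancel, permMatrix_one]⟩

theorem ofPerm_mul_apply (σ : Equiv.Perm K) (u : unitaryGroup K ℂ) (a b : K) :
    (ofPerm σ * u) a b = u (σ a) b := by
  simp [ofPerm, PEquiv.toMatrix_toPEquiv_mul]

end Matrix.unitaryGroup

section BlockAssemble

open Matrix.unitaryGroup

variable {I : Type*} [Fintype I] [DecidableEq I] {B : ℕ} (β : I → Fin B)

theorem blockAssemble_apply_of_eq (v : ∀ α, unitaryGroup {i : I // β i = α} ℂ) {α : Fin B}
    {i j : I} (hi : β i = α) (hj : β j = α) : blockAssemble β v i j = v α ⟨i, hi⟩ ⟨j, hj⟩ := by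
  subst hi
  simp [blockAssemble, hj]

theorem blockAssemble_apply_of_ne (v : ∀ α, unitaryGroup {i : I // β i = α} ℂ) {i j : I}
    (h : β j ≠ β i) : blockAssemble β v i j = 0 := by
  simp [blockAssemble, h]

theorem blockAssemble_eq_submatrix_blockDiagonal' (v : ∀ α, unitaryGroup {i : I // β i = α} ℂ) :
    blockAssemble β v = (blockDiagonal' fun α => (v α : Matrix _ _ ℂ)).submatrix
      (Equiv.sigmaFiberEquiv β).symm (Equiv.sigmaFiberEquiv β).symm := by
  ext i j
  by_cases h : β j = β i
  · have hj : (Equiv.sigmaFiberEquiv β).symm j = ⟨β i, ⟨j, h⟩⟩ := Sigma.subtype_ext h rfl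
    rw [submatrix_apply, hj, blockAssemble_apply_of_eq β v rfl h]
    exact (blockDiagonal'_apply_eq
      (fun α => (v α : Matrix {i // β i = α} {i // β i = α} ℂ)) _ _ _).symm
  · simp [blockAssemble_apply_of_ne β v h, blockDiagonal'_apply, Ne.symm h]

theorem blockAssemble_mem_unitaryGroup (v : ∀ α, unitaryGroup {i : I // β i = α} ℂ) :
    blockAssemble β v ∈ unitaryGroup I ℂ := by
  rw [mem_unitaryGroup_iff, blockAssemble_eq_submatrix_blockDiagonal', star_eq_conjTranspose,
    conjTranspose_submatrix, submatrix_mul_equiv, blockDiagonal'_conjTranspose,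
    ← blockDiagonal'_mul]
  convert submatrix_one_equiv (α := ℂ) (Equiv.sigmaFiberEquiv β).symm
  rw [← blockDiagonal'_one]
  congr with α : 1
  exact (v α).2.2

theorem measurable_blockAssemble_apply (i j : I) :
    Measurable fun v : ∀ α, unitaryGroup {i : I // β i = α} ℂ => blockAssemble β v i j := by
  by_cases h : β j = β i
  · simp_rw [blockAssemble_apply_of_eq β _ rfl h]
    exact (continuous_subtype_val.matrix_elem _ _).measurable.comp (measurable_pi_apply (β i))
  · simp_rw [blockAssemble_apply_of_ne β _ h]
    exact measurable_const

theorem integrable_blockAssemble_mul_conj (μ : Measure (∀ α, unitaryGroup {i : I // β i = α} ℂ))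
    [IsFiniteMeasure μ] (i j i' j' : I) :
    Integrable (fun v => blockAssemble β v i j * conj (blockAssemble β v i' j')) μ := by
  have hmeas := (measurable_blockAssemble_apply β i j).mul
    (Complex.continuous_conj.measurable.comp (measurable_blockAssemble_apply β i' j'))
  refine .of_bound hmeas.aestronglyMeasurable 1 (.of_forall fun v => ?_)
  have hu := blockAssemble_mem_unitaryGroup β v
  rw [norm_mul, RCLike.norm_conj]
  exact mul_le_one₀ (entry_norm_bound_of_unitary hu i j) (norm_nonneg _)
    (entry_norm_bound_of_unitary hu i' j')

def blockSignFlip (i : I) : ∀ α, unitaryGroup {k : I // β k = α} ℂ :=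
  fun _ => signFlip fun k => k.1 = i

theorem blockAssemble_blockSignFlip_mul_apply (i : I)
    (v : ∀ α, unitaryGroup {i : I // β i = α} ℂ) (a b : I) :
    blockAssemble β (blockSignFlip β i * v) a b =
      (if a = i then -1 else 1) * blockAssemble β v a b := by
  by_cases h : β b = β a
  · simp_rw [blockAssemble_apply_of_eq β _ rfl h]
    exact signFlip_mul_apply _ _ _ _
  · simp [blockAssemble_apply_of_ne β _ h]

def blockPerm (σ : Equiv.Perm I) (hσ : ∀ k, β (σ k) = β k) :
    ∀ α, unitaryGroup {k : I // β k = α} ℂ :=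
  fun _ => ofPerm (σ.subtypeEquiv fun k => by rw [hσ])

theorem blockAssemble_blockPerm_mul_apply (σ : Equiv.Perm I) (hσ : ∀ k, β (σ k) = β k)
    (v : ∀ α, unitaryGroup {i : I // β i = α} ℂ) (a b : I) :
    blockAssemble β (blockPerm β σ hσ * v) a b = blockAssemble β v (σ a) b := by
  by_cases h : β b = β a
  · rw [blockAssemble_apply_of_eq β _ rfl h, blockAssemble_apply_of_eq β _ (hσ a) h]
    exact ofPerm_mul_apply _ _ _ _
  · rw [blockAssemble_apply_of_ne β _ h, blockAssemble_apply_of_ne β _ (by rwa [hσ])]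

end BlockAssemble

section Moments

open Matrix.unitaryGroup

variable {I : Type*} [Fintype I] [DecidableEq I] {B : ℕ} (β : I → Fin B)
  (μ : Measure (∀ α, unitaryGroup {i : I // β i = α} ℂ))

theorem integral_blockAssemble_mul_conj_of_ne [μ.IsMulLeftInvariant] {i i' : I} (h : i ≠ i')
    (j j' : I) : ∫ v, blockAssemble β v i j * conj (blockAssemble β v i' j') ∂μ = 0 := by
  have hflip := integral_mul_left_eq_self (μ := μ)
    (fun v => blockAssemble β v i j * conj (blockAssemble β v i' j')) (blockSignFlip β i)
  simp only [blockAssemble_blockSignFlip_mul_apply, if_pos, if_neg h.symm, one_mul,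
    neg_mul, integral_neg] at hflip
  linear_combination -hflip / 2

theorem integral_blockAssemble_mul_conj_row_eq_of_block_eq [μ.IsMulLeftInvariant] {i k : I}
    (h : β k = β i) (j j' : I) :
    ∫ v, blockAssemble β v k j * conj (blockAssemble β v k j') ∂μ =
      ∫ v, blockAssemble β v i j * conj (blockAssemble β v i j') ∂μ := by
  have hσ (a : I) : β (Equiv.swap i k a) = β a := by
    rw [Equiv.swap_apply_def]; split_ifs <;> simp_all
  have hperm := integral_mul_left_eq_self (μ := μ)
    (fun v => blockAssemble β v k j * conj (blockAssemble β v k j')) (blockPerm β _ hσ)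
  simp only [blockAssemble_blockPerm_mul_apply, Equiv.swap_apply_right] at hperm
  exact hperm.symm

theorem sum_integral_blockAssemble_mul_conj [IsProbabilityMeasure μ] (j j' : I) :
    ∑ k, ∫ v, blockAssemble β v k j * conj (blockAssemble β v k j') ∂μ =
      if j = j' then 1 else 0 := by
  have hunit (v : ∀ α, unitaryGroup {i : I // β i = α} ℂ) :
      ∑ k, blockAssemble β v k j * conj (blockAssemble β v k j') = if j = j' then 1 else 0 := by
    have := congrFun₂ (blockAssemble_mem_unitaryGroup β v).1 j' j
    rw [mul_apply, one_apply] at this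
    simpa [mul_comm, eq_comm] using this
  rw [← integral_finsetSum _ fun k _ => integrable_blockAssemble_mul_conj β μ k j k j']
  simp [hunit]

theorem integral_blockAssemble_mul_conj [IsProbabilityMeasure μ] [μ.IsMulLeftInvariant]
    (i j i' j' : I) :
    ∫ v, blockAssemble β v i j * conj (blockAssemble β v i' j') ∂μ =
      if i = i' ∧ j = j' ∧ β j = β i then (Fintype.card {k : I // β k = β i} : ℂ)⁻¹ else 0 := by
  rcases ne_or_eq i i' with h | rfl
  · rw [integral_blockAssemble_mul_conj_of_ne β μ h, if_neg fun h' => h h'.1]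
  by_cases hj : β j = β i
  swap
  · simp [blockAssemble_apply_of_ne β _ hj, hj]
  set X := ∫ v, blockAssemble β v i j * conj (blockAssemble β v i j') ∂μ
  have hdiag (k : I) : ∫ v, blockAssemble β v k j * conj (blockAssemble β v k j') ∂μ =
      if β k = β i then X else 0 := by
    by_cases hk : β k = β i
    · rw [if_pos hk, integral_blockAssemble_mul_conj_row_eq_of_block_eq β μ hk]
    · simp [blockAssemble_apply_of_ne β _ (hj.trans_ne (Ne.symm hk)), hk]
  have hsum := sum_integral_blockAssemble_mul_conj β μ j j'
  rw [Finset.sum_congr rfl fun k _ => hdiag k, Finset.sum_ite, Finset.sum_const_zero, add_zero,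
    Finset.sum_const, ← Fintype.card_subtype, nsmul_eq_mul] at hsum
  have : Nonempty {k : I // β k = β i} := ⟨⟨i, rfl⟩⟩
  have hN : (Fintype.card {k : I // β k = β i} : ℂ) ≠ 0 := Nat.cast_ne_zero.2 Fintype.card_ne_zero
  simp only [true_and, hj, and_true]
  split_ifs at hsum ⊢
  · exact eq_inv_of_mul_eq_one_right hsum
  · exact (mul_eq_zero.1 hsum).resolve_left hN

end Moments

section Twirl

variable {I J R : Type*} [Fintype J] [Fintype R] [DecidableEq R]

theorem kronecker_one_mul_mul_conjTranspose_apply {α : Type*} [CommSemiring α] [StarRing α]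
    (U : Matrix I J α) (A : Matrix (J × R) (J × R) α) (i i' : I) (r r' : R) :
    ((U ⊗ₖ (1 : Matrix R R α)) * A * (U ⊗ₖ (1 : Matrix R R α))ᴴ) (i, r) (i', r') =
      ∑ j, ∑ j', U i j * star (U i' j') * A (j, r) (j', r') := by
  simp only [mul_apply, kroneckerMap_apply, one_apply, mul_ite, mul_one, mul_zero, ite_mul,
    zero_mul, Fintype.sum_prod_type, sum_ite_eq, mem_univ, ↓reduceIte, conjTranspose_apply,
    apply_ite star, star_zero, sum_mul]
  rw [Finset.sum_comm]
  simp_rw [mul_right_comm]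

theorem integral_kronecker_one_mul_mul_conjTranspose_apply {X : Type*} [MeasurableSpace X]
    {μ : Measure X} {u : X → Matrix I J ℂ} {i i' : I}
    (hu : ∀ j j', Integrable (fun x => u x i j * conj (u x i' j')) μ)
    (A : Matrix (J × R) (J × R) ℂ) (r r' : R) :
    ∫ x, ((u x ⊗ₖ (1 : Matrix R R ℂ)) * A * (u x ⊗ₖ (1 : Matrix R R ℂ))ᴴ) (i, r) (i', r') ∂μ =
      ∑ j, ∑ j', (∫ x, u x i j * conj (u x i' j') ∂μ) * A (j, r) (j', r') := by
  simp_rw [kronecker_one_mul_mul_conjTranspose_apply, Complex.star_def]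
  rw [integral_finsetSum _ fun j _ => integrable_finsetSum _ fun j' _ => (hu j j').mul_const _]
  simp_rw [integral_finsetSum _ fun j' _ => (hu _ j').mul_const _, integral_mul_const]

theorem ptraceFst_diagonal_kronecker_one_mul_mul_apply [DecidableEq J] (d e : J → ℂ)
    (A : Matrix (J × R) (J × R) ℂ) (r r' : R) :
    ptraceFst ((diagonal d ⊗ₖ (1 : Matrix R R ℂ)) * A * (diagonal e ⊗ₖ (1 : Matrix R R ℂ))) r r' =
      ∑ j, d j * A (j, r) (j, r') * e j := by
  simp [ptraceFst, ← diagonal_one, diagonal_kronecker_diagonal, diagonal_mul, mul_diagonal]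

def blockProjection {ι : Type*} [DecidableEq J] [DecidableEq ι] (β : J → ι) (α : ι) :
    Matrix J J ℂ :=
  diagonal fun k => if β k = α then 1 else 0

theorem sum_smul_blockProjection_kronecker_ptraceFst_apply [DecidableEq J] {ι : Type*}
    [Fintype ι] [DecidableEq ι] (β : J → ι) (c : ι → ℂ) (A : Matrix (J × R) (J × R) ℂ)
    (i i' : J) (r r' : R) :
    (∑ α, c α • (blockProjection β α ⊗ₖ ptraceFst ((blockProjection β α ⊗ₖ (1 : Matrix R R ℂ)) *
        A * (blockProjection β α ⊗ₖ (1 : Matrix R R ℂ))))) (i, r) (i', r') =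
      if i = i' then c (β i) * ∑ j, if β j = β i then A (j, r) (j, r') else 0 else 0 := by
  unfold blockProjection
  simp_rw [Matrix.sum_apply, Matrix.smul_apply, kroneckerMap_apply,
    ptraceFst_diagonal_kronecker_one_mul_mul_apply]
  rcases ne_or_eq i i' with hii | rfl
  · simp [hii]
  simp only [diagonal_apply_eq, ite_mul, one_mul, zero_mul, mul_ite, mul_one, mul_zero, mul_sum,
    smul_eq_mul]
  rw [Finset.sum_comm]
  refine Finset.sum_congr rfl fun j _ => ?_
  by_cases hj : β j = β i <;> simp [hj, eq_comm]

end Twirl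

theorem block_haar_unitary_average_general
    {I R : Type*} [Fintype I] [Fintype R] [DecidableEq I] [DecidableEq R]
    {B : ℕ} (β : I → Fin B)
    (ν : ∀ α : Fin B, Measure (Matrix.unitaryGroup {i : I // β i = α} ℂ))
    (hprob : ∀ α, IsProbabilityMeasure (ν α))
    (hhaar : ∀ α, (ν α).IsHaarMeasure)
    (P : Fin B → Matrix I I ℂ)
    (hP : ∀ α, P α = Matrix.diagonal fun i => if β i = α then 1 else 0)
    (A : Matrix (I × R) (I × R) ℂ) :
    ∀ pq qr : I × R,
      (∫ v, ((blockAssemble β v ⊗ₖ (1 : Matrix R R ℂ)) * A *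
            (blockAssemble β v ⊗ₖ (1 : Matrix R R ℂ))ᴴ) pq qr
          ∂(Measure.pi ν)) =
      (∑ α : Fin B,
        ((Fintype.card {i : I // β i = α} : ℂ))⁻¹ •
          ((P α) ⊗ₖ ptraceFst
            ((P α ⊗ₖ (1 : Matrix R R ℂ)) * A * (P α ⊗ₖ (1 : Matrix R R ℂ)))))
        pq qr := by
  rintro ⟨i, r⟩ ⟨i', r'⟩
  have := hprob
  have := hhaar
  rw [integral_kronecker_one_mul_mul_conjTranspose_apply
      (integrable_blockAssemble_mul_conj β _ i · i' ·),
    show P = blockProjection β from funext hP, sum_smul_blockProjection_kronecker_ptraceFst_apply]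
  simp_rw [integral_blockAssemble_mul_conj]
  rcases ne_or_eq i i' with hii | rfl
  · simp [hii]
  simp [ite_and, Finset.mul_sum]

/-- **First-moment formula for block-diagonal Haar-random unitaries.**
Let `u = blockAssemble β v` be the random unitary on `ℂ^I`, block diagonal with respect
to the blocks `β⁻¹(α)` and Haar-distributed independently on each block (i.e. `v` is
distributed according to the product `Measure.pi ν` of Haar probability measures).
Then for every matrix `A` on `ℂ^I ⊗ ℂ^R`, entrywise,
`E_v[(u ⊗ 1)·A·(u ⊗ 1)†] = Σ_α (1/N_α)·(P_α ⊗ Tr_I[(P_α ⊗ 1)·A·(P_α ⊗ 1)])`,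
where `P_α` is the diagonal projection onto block `α` and `N_α` its size. -/
theorem block_haar_unitary_average
    {I R : Type*} [Fintype I] [Fintype R] [DecidableEq I] [DecidableEq R]
    [Nonempty I] [Nonempty R]
    {B : ℕ} (hB : 1 ≤ B) (β : I → Fin B) (hβ : Function.Surjective β)
    (ν : ∀ α : Fin B, Measure (Matrix.unitaryGroup {i : I // β i = α} ℂ))
    (hprob : ∀ α, IsProbabilityMeasure (ν α))
    (hhaar : ∀ α, (ν α).IsHaarMeasure)
    (P : Fin B → Matrix I I ℂ)
    (hP : ∀ α, P α = Matrix.diagonal fun i => if β i = α then 1 else 0)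
    (A : Matrix (I × R) (I × R) ℂ) :
    ∀ pq qr : I × R,
      (∫ v, ((blockAssemble β v ⊗ₖ (1 : Matrix R R ℂ)) * A *
            (blockAssemble β v ⊗ₖ (1 : Matrix R R ℂ))ᴴ) pq qr
          ∂(Measure.pi ν)) =
      (∑ α : Fin B,
        ((Fintype.card {i : I // β i = α} : ℂ))⁻¹ •
          ((P α) ⊗ₖ ptraceFst
            ((P α ⊗ₖ (1 : Matrix R R ℂ)) * A * (P α ⊗ₖ (1 : Matrix R R ℂ)))))
        pq qr :=
  block_haar_unitary_average_general β ν hprob hhaar P hP A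
end

section
/- Let N₁, N₂, M₁, M₂ be nonempty finite types, set N := N₁ × N₂, and for a matrix A ∈ Matrix(N×(M₁×M₂), N×(M₁×M₂), ℂ) define the fully depolarising channel on the N factor by D[A] := (1/|N|)·I_N ⊗ Tr_N A. Then ‖ Tr_{N₁×M₁}( D[A] ) ‖_F = (1/√|N₂|) · ‖ Tr_N( Tr_{M₁} A ) ‖_F, where Tr_{N₁×M₁}, Tr_N, Tr_{M₁} denote partial traces over the indicated tensor factors and ‖·‖_F is the Frobenius norm. In particular ‖ Tr_{N₁×M₁}( D[A] ) ‖_F ≤ (1/√|N₂|) · ‖ Tr_N( Tr_{M₁} A ) ‖_F. -/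
/-!
Partial traces factor through Kronecker products, `Tr_{N₁×M₁}(X ⊗ B) = Tr_{N₁} X ⊗ Tr_{M₁} B`,
and `Tr_{N₁} 1_{N₁×N₂} = |N₁| · 1_{N₂}`, so `Tr_{N₁×M₁} D[A] = |N₂|⁻¹ · 1_{N₂} ⊗ Tr_{M₁} Tr_N A`.
Partial traces over different factors commute, and the Frobenius norm is multiplicative on
Kronecker products with `‖1_{N₂}‖_F = √|N₂|`; the norm is therefore `√|N₂| / |N₂| = 1 / √|N₂|`
times `‖Tr_N Tr_{M₁} A‖_F`.
-/

open Finset Matrix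
open scoped Kronecker

/-- The Frobenius norm `‖M‖_F = √(Σ_{i,j} |M_{ij}|²)` of a complex matrix. -/
noncomputable def frobeniusNorm {n m : Type*} [Fintype n] [Fintype m]
    (M : Matrix n m ℂ) : ℝ :=
  Real.sqrt (∑ i, ∑ j, ‖M i j‖ ^ 2)

/-- Partial trace over the first tensor factor:
`(Tr_N M)(m, m') = Σ_n M((n,m), (n,m'))`. -/
noncomputable def ptraceN {N M : Type*} [Fintype N]
    (A : Matrix (N × M) (N × M) ℂ) : Matrix M M ℂ :=
  Matrix.of fun m m' => ∑ n, A (n, m) (n, m')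

/-- Partial trace over the `N₁` and `M₁` tensor factors of a matrix indexed by
`(N₁ × N₂) × (M₁ × M₂)`. -/
noncomputable def ptraceN1M1 {N₁ N₂ M₁ M₂ : Type*} [Fintype N₁] [Fintype M₁]
    (A : Matrix ((N₁ × N₂) × (M₁ × M₂)) ((N₁ × N₂) × (M₁ × M₂)) ℂ) :
    Matrix (N₂ × M₂) (N₂ × M₂) ℂ :=
  Matrix.of fun p q => ∑ a : N₁, ∑ c : M₁,
    A ((a, p.1), (c, p.2)) ((a, q.1), (c, q.2))

/-- Partial trace over the `M₁` tensor factor of a matrix indexed by `N × (M₁ × M₂)`. -/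
noncomputable def ptraceM1 {N M₁ M₂ : Type*} [Fintype M₁]
    (A : Matrix (N × (M₁ × M₂)) (N × (M₁ × M₂)) ℂ) :
    Matrix (N × M₂) (N × M₂) ℂ :=
  Matrix.of fun p q => ∑ c : M₁, A (p.1, (c, p.2)) (q.1, (c, q.2))

section FrobeniusNorm

variable {k l m n : Type*} [Fintype k] [Fintype l] [Fintype m] [Fintype n]

theorem frobeniusNorm_smul (c : ℂ) (M : Matrix m n ℂ) :
    frobeniusNorm (c • M) = ‖c‖ * frobeniusNorm M := by
  simp only [frobeniusNorm, Matrix.smul_apply, smul_eq_mul, norm_mul, mul_pow, ← Finset.mul_sum]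
  rw [Real.sqrt_mul (by positivity), Real.sqrt_sq (norm_nonneg c)]

theorem frobeniusNorm_kronecker (X : Matrix k l ℂ) (Y : Matrix m n ℂ) :
    frobeniusNorm (X ⊗ₖ Y) = frobeniusNorm X * frobeniusNorm Y := by
  simp only [frobeniusNorm, Fintype.sum_prod_type, kroneckerMap_apply, norm_mul, mul_pow]
  rw [← Real.sqrt_mul (by positivity)]
  congr 1
  simp only [Finset.sum_mul_sum]

theorem frobeniusNorm_one [DecidableEq n] :
    frobeniusNorm (1 : Matrix n n ℂ) = Real.sqrt (Fintype.card n) := by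
  simp [frobeniusNorm, one_apply, apply_ite]

end FrobeniusNorm

section PartialTrace

variable {N₁ N₂ M₁ M₂ : Type*} [Fintype N₁] [Fintype M₁]

theorem ptraceN_one [DecidableEq N₁] [DecidableEq N₂] :
    ptraceN (1 : Matrix (N₁ × N₂) (N₁ × N₂) ℂ) = (Fintype.card N₁ : ℂ) • 1 := by
  ext p q
  by_cases h : p = q <;> simp [ptraceN, one_apply, h]

theorem ptraceN1M1_smul (c : ℂ)
    (A : Matrix ((N₁ × N₂) × (M₁ × M₂)) ((N₁ × N₂) × (M₁ × M₂)) ℂ) :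
    ptraceN1M1 (c • A) = c • ptraceN1M1 A := by
  ext p q
  simp [ptraceN1M1, Finset.mul_sum]

theorem ptraceN1M1_kronecker (X : Matrix (N₁ × N₂) (N₁ × N₂) ℂ)
    (B : Matrix (M₁ × M₂) (M₁ × M₂) ℂ) :
    ptraceN1M1 (X ⊗ₖ B) = ptraceN X ⊗ₖ ptraceN B := by
  ext p q
  simp [ptraceN1M1, ptraceN, Finset.sum_mul_sum]

theorem ptraceN_ptraceN_eq_ptraceN_ptraceM1 {N : Type*} [Fintype N]
    (A : Matrix (N × (M₁ × M₂)) (N × (M₁ × M₂)) ℂ) :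
    ptraceN (ptraceN A) = ptraceN (ptraceM1 A) := by
  ext p q
  exact Finset.sum_comm

end PartialTrace

theorem depolarised_ptrace_frobenius_general
    {N₁ N₂ M₁ M₂ : Type*}
    [Fintype N₁] [Fintype N₂] [Fintype M₁] [Fintype M₂]
    [DecidableEq N₁] [DecidableEq N₂]
    [Nonempty N₁]
    (A : Matrix ((N₁ × N₂) × (M₁ × M₂)) ((N₁ × N₂) × (M₁ × M₂)) ℂ)
    (DA : Matrix ((N₁ × N₂) × (M₁ × M₂)) ((N₁ × N₂) × (M₁ × M₂)) ℂ)
    (hDA : DA = ((Fintype.card (N₁ × N₂) : ℂ))⁻¹ •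
      ((1 : Matrix (N₁ × N₂) (N₁ × N₂) ℂ) ⊗ₖ ptraceN A)) :
    frobeniusNorm (ptraceN1M1 DA) =
      (1 / Real.sqrt (Fintype.card N₂)) * frobeniusNorm (ptraceN (ptraceM1 A)) ∧
    frobeniusNorm (ptraceN1M1 DA) ≤
      (1 / Real.sqrt (Fintype.card N₂)) * frobeniusNorm (ptraceN (ptraceM1 A)) := by
  have hnorm : frobeniusNorm (ptraceN1M1 DA) =
      (1 / Real.sqrt (Fintype.card N₂)) * frobeniusNorm (ptraceN (ptraceM1 A)) := by
    rw [hDA, ptraceN1M1_smul, ptraceN1M1_kronecker, ptraceN_one, smul_kronecker,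
      ptraceN_ptraceN_eq_ptraceN_ptraceM1, frobeniusNorm_smul, frobeniusNorm_smul,
      frobeniusNorm_kronecker, frobeniusNorm_one, ← Real.sqrt_div_self']
    simp only [Fintype.card_prod, Nat.cast_mul, norm_inv, norm_mul, Complex.norm_natCast]
    field_simp
  exact ⟨hnorm, hnorm.le⟩

/-- **Frobenius norm of a partially traced fully depolarised state.**
For the fully depolarising channel `D[A] = (1/|N|)·1_N ⊗ Tr_N A` on the factor
`N = N₁ × N₂` of `N × (M₁ × M₂)`, the Frobenius norm of the partial trace of `D[A]`
over `N₁ × M₁` equals `(1/√|N₂|)·‖Tr_N (Tr_{M₁} A)‖_F`; in particular it is bounded by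
that quantity. -/
theorem depolarised_ptrace_frobenius
    {N₁ N₂ M₁ M₂ : Type*}
    [Fintype N₁] [Fintype N₂] [Fintype M₁] [Fintype M₂]
    [DecidableEq N₁] [DecidableEq N₂]
    [Nonempty N₁] [Nonempty N₂] [Nonempty M₁] [Nonempty M₂]
    (A : Matrix ((N₁ × N₂) × (M₁ × M₂)) ((N₁ × N₂) × (M₁ × M₂)) ℂ)
    (DA : Matrix ((N₁ × N₂) × (M₁ × M₂)) ((N₁ × N₂) × (M₁ × M₂)) ℂ)
    (hDA : DA = ((Fintype.card (N₁ × N₂) : ℂ))⁻¹ •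
      ((1 : Matrix (N₁ × N₂) (N₁ × N₂) ℂ) ⊗ₖ ptraceN A)) :
    frobeniusNorm (ptraceN1M1 DA) =
      (1 / Real.sqrt (Fintype.card N₂)) * frobeniusNorm (ptraceN (ptraceM1 A)) ∧
    frobeniusNorm (ptraceN1M1 DA) ≤
      (1 / Real.sqrt (Fintype.card N₂)) * frobeniusNorm (ptraceN (ptraceM1 A)) :=
  depolarised_ptrace_frobenius_general A DA hDA
end
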